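/- Let Y ⊆ ℝ^m be a nonempty finite set, y* ∈ Y, and Z a standard Gaussian vector. The perturbed loss L(θ) = E[max_{y ∈ Y}(θ+Z)ᵀy] − θᵀy* has gradient ∇L(θ) = E[argmax_{y ∈ Y}(θ+Z)ᵀy] − y* (Equation (6) of the paper). -/

import Mathlib

/-!
The function `x ↦ max_{y ∈ Y} ⟪x, y⟫` is Lipschitz with constant `max_{y ∈ Y} ‖y‖`, and near a
point `x` where the maximiser `y₀` is unique it coincides with `⟪·, y₀⟫`, so its derivative there
is `y₀`. For a standard Gaussian `Z`, a tie between two points `y ≠ y'` of `Y` at `θ + Z` means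
that `Z` lies on an affine hyperplane orthogonal to `y - y'`, an event of probability zero because
`⟪y - y', Z⟫` is a nondegenerate real Gaussian. So almost surely the maximiser at `θ + Z` is unique
and equals `g (θ + Z)`, and differentiating under the integral sign, with the Lipschitz constant as
dominating function, gives the gradient `E[g (θ + Z)]`.
-/

open scoped RealInnerProductSpace
open MeasureTheory

/-- `Z` is a standard Gaussian random vector in `ℝ^m`: its coordinates are independent
and each is distributed as `N(0,1)`. -/
def IsStdGaussian {Ω : Type*} [MeasurableSpace Ω] (μ : Measure Ω) {m : ℕ}
    (Z : Ω → EuclideanSpace ℝ (Fin m)) : Prop :=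
  (∀ i, Measure.map (fun ω => Z ω i) μ = ProbabilityTheory.gaussianReal 0 1) ∧
    ProbabilityTheory.iIndepFun (m := fun _ : Fin m => (inferInstance : MeasurableSpace ℝ))
      (fun i ω => Z ω i) μ

open ProbabilityTheory Filter Topology

section Gradient

variable {F : Type*} [NormedAddCommGroup F] [InnerProductSpace ℝ F] [CompleteSpace F]
  {f h : F → ℝ} {f' h' x : F}

theorem HasGradientAt.sub (hf : HasGradientAt f f' x) (hh : HasGradientAt h h' x) :
    HasGradientAt (fun y => f y - h y) (f' - h') x := by
  rw [hasGradientAt_iff_hasFDerivAt] at hf hh ⊢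
  rw [map_sub]
  exact hf.sub hh

theorem hasGradientAt_inner_const (a : F) : HasGradientAt (fun y => ⟪y, a⟫) a x := by
  have hdual : (fun y => ⟪y, a⟫) = InnerProductSpace.toDual ℝ F a :=
    funext fun y => by simp [real_inner_comm]
  rw [hasGradientAt_iff_hasFDerivAt, hdual]
  exact (InnerProductSpace.toDual ℝ F a).hasFDerivAt

end Gradient

namespace Finset

variable {E : Type*} [NormedAddCommGroup E] [InnerProductSpace ℝ E]
  (Y : Finset E) (hY : Y.Nonempty)

theorem sup'_inner_le_add (x x' : E) :
    Y.sup' hY (fun y => ⟪x, y⟫) ≤ Y.sup' hY (fun y => ⟪x', y⟫) + Y.sup' hY (‖·‖) * ‖x - x'‖ := by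
  refine sup'_le _ _ fun y hy => ?_
  calc ⟪x, y⟫ = ⟪x', y⟫ + ⟪x - x', y⟫ := by rw [inner_sub_left]; ring
    _ ≤ Y.sup' hY (fun y => ⟪x', y⟫) + ‖y‖ * ‖x - x'‖ := by
      gcongr
      · exact le_sup' (fun y => ⟪x', y⟫) hy
      · rw [mul_comm]; exact real_inner_le_norm _ _
    _ ≤ Y.sup' hY (fun y => ⟪x', y⟫) + Y.sup' hY (‖·‖) * ‖x - x'‖ := by
      gcongr
      exact le_sup' (‖·‖) hy

theorem abs_sup'_inner_sub_le (x x' : E) :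
    |Y.sup' hY (fun y => ⟪x, y⟫) - Y.sup' hY (fun y => ⟪x', y⟫)| ≤
      Y.sup' hY (‖·‖) * ‖x - x'‖ := by
  have := sup'_inner_le_add Y hY x' x
  rw [norm_sub_rev] at this
  exact abs_sub_le_iff.2 ⟨by linarith [sup'_inner_le_add Y hY x x'], by linarith⟩

theorem hasFDerivAt_sup'_inner {x y₀ : E} (hy₀ : y₀ ∈ Y)
    (hlt : ∀ y ∈ Y, y ≠ y₀ → ⟪x, y⟫ < ⟪x, y₀⟫) :
    HasFDerivAt (fun x => Y.sup' hY fun y => ⟪x, y⟫) (innerSL ℝ y₀) x := by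
  have hnear : ∀ᶠ x' in 𝓝 x, ∀ y ∈ Y, y ≠ y₀ → ⟪x', y⟫ < ⟪x', y₀⟫ := by
    refine (eventually_all_finset Y).2 fun y hy => ?_
    by_cases hne : y = y₀
    · exact Eventually.of_forall fun _ h => absurd hne h
    · exact (((continuous_id.inner continuous_const).tendsto x).eventually_lt
        ((continuous_id.inner continuous_const).tendsto x) (hlt y hy hne)).mono fun _ h _ => h
  refine (innerSL ℝ y₀).hasFDerivAt.congr_of_eventuallyEq (hnear.mono fun x' h' => ?_)
  rw [innerSL_apply_apply, real_inner_comm]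
  refine le_antisymm (sup'_le _ _ fun y hy => ?_) (le_sup' (fun y => ⟪x', y⟫) hy₀)
  rcases eq_or_ne y y₀ with rfl | hne
  · rfl
  · exact (h' y hy hne).le

end Finset

section ExpectedMax

variable {E Ω : Type*} [NormedAddCommGroup E] [InnerProductSpace ℝ E] [CompleteSpace E]
  [SecondCountableTopology E] [MeasurableSpace E] [BorelSpace E]
  [MeasurableSpace Ω] {μ : Measure Ω} [IsFiniteMeasure μ]

theorem hasGradientAt_integral_sup'_inner (Y : Finset E) (hY : Y.Nonempty) {Z : Ω → E}
    (hZ : Integrable Z μ) {g : E → E} (hgmeas : Measurable g) (hgY : ∀ x, g x ∈ Y) {θ : E}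
    (huniq : ∀ᵐ ω ∂μ, ∀ y ∈ Y, y ≠ g (θ + Z ω) → ⟪θ + Z ω, y⟫ < ⟪θ + Z ω, g (θ + Z ω)⟫) :
    HasGradientAt (fun θ' => ∫ ω, Y.sup' hY (fun y => ⟪θ' + Z ω, y⟫) ∂μ)
      (∫ ω, g (θ + Z ω) ∂μ) θ := by
  set C := Y.sup' hY (‖·‖)
  have hcont : Continuous fun x : E => Y.sup' hY fun y => ⟪x, y⟫ :=
    Continuous.finset_sup'_apply hY fun y _ => continuous_id.inner continuous_const
  have hmeas (θ' : E) : AEStronglyMeasurable (fun ω => Y.sup' hY fun y => ⟪θ' + Z ω, y⟫) μ :=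
    hcont.comp_aestronglyMeasurable (aestronglyMeasurable_const.add hZ.1)
  have hint : Integrable (fun ω => Y.sup' hY fun y => ⟪θ + Z ω, y⟫) μ := by
    refine (((integrable_const θ).add hZ).norm.const_mul C).mono' (hmeas θ)
      (ae_of_all _ fun ω => ?_)
    simpa using Y.abs_sup'_inner_sub_le hY (θ + Z ω) 0
  have hg_int : Integrable (fun ω => g (θ + Z ω)) μ :=
    (integrable_const C).mono'
      (hgmeas.comp_aemeasurable (hZ.1.aemeasurable.const_add θ)).aestronglyMeasurable
      (ae_of_all _ fun ω => Y.le_sup' (‖·‖) (hgY _))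
  -- The integrand is differentiable at `θ` only almost surely, hence the Lipschitz form of
  -- differentiation under the integral sign.
  obtain ⟨-, hderiv⟩ := hasFDerivAt_integral_of_dominated_loc_of_lip' (x₀ := θ)
    (F' := fun ω => innerSL ℝ (g (θ + Z ω))) (bound := fun _ => C) univ_mem
    (fun θ' _ => hmeas θ') hint ((innerSL ℝ).continuous.comp_aestronglyMeasurable hg_int.1)
    (ae_of_all _ fun ω θ' _ => by simpa using Y.abs_sup'_inner_sub_le hY (θ' + Z ω) (θ + Z ω))
    (integrable_const C)
    (huniq.mono fun ω hω => by
      simpa [Function.comp_def] using (Y.hasFDerivAt_sup'_inner hY (hgY _) hω).comp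
        (f := fun x => x + Z ω) θ ((hasFDerivAt_id θ).add_const (Z ω)))
  have hdual : InnerProductSpace.toDual ℝ E (∫ ω, g (θ + Z ω) ∂μ) =
      ∫ ω, innerSL ℝ (g (θ + Z ω)) ∂μ := by
    rw [ContinuousLinearMap.integral_comp_comm _ hg_int]
    rfl
  rw [hasGradientAt_iff_hasFDerivAt, hdual]
  exact hderiv

end ExpectedMax

section StdGaussian

variable {E : Type*} [NormedAddCommGroup E] [InnerProductSpace ℝ E] [FiniteDimensional ℝ E]
  [MeasurableSpace E] [BorelSpace E]

theorem stdGaussian_hyperplane_eq_zero {v : E} (hv : v ≠ 0) (c : ℝ) :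
    stdGaussian E {x | ⟪v, x⟫ = c} = 0 := by
  have hvar : (Var[innerSL ℝ v; stdGaussian E]).toNNReal ≠ 0 := by
    rw [variance_dual_stdGaussian, innerSL_apply_norm]
    simpa using hv
  have := nullSingletonClass_gaussianReal (μ := (stdGaussian E)[innerSL ℝ v]) hvar
  rw [← IsGaussian.map_eq_gaussianReal] at this
  calc stdGaussian E {x | ⟪v, x⟫ = c} = (stdGaussian E).map (innerSL ℝ v) {c} :=
        (Measure.map_apply (innerSL ℝ v).continuous.measurable (measurableSet_singleton c)).symm
    _ = 0 := measure_singleton c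

theorem ae_stdGaussian_inner_ne (Y : Finset E) (θ : E) :
    ∀ᵐ x ∂stdGaussian E, ∀ y ∈ Y, ∀ y' ∈ Y, y ≠ y' → ⟪θ + x, y⟫ ≠ ⟪θ + x, y'⟫ := by
  refine (eventually_all_finset Y).2 fun y _ => (eventually_all_finset Y).2 fun y' _ => ?_
  rcases eq_or_ne y y' with rfl | hne
  · exact Eventually.of_forall fun _ h => absurd rfl h
  refine measure_mono_null (fun x hx => ?_)
    (stdGaussian_hyperplane_eq_zero (sub_ne_zero.2 hne) ⟪θ, y' - y⟫)
  have htie : ⟪θ + x, y⟫ = ⟪θ + x, y'⟫ := by simpa [hne] using hx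
  change ⟪y - y', x⟫ = ⟪θ, y' - y⟫
  rw [inner_add_left, inner_add_left, real_inner_comm y x, real_inner_comm y' x] at htie
  rw [inner_sub_left, inner_sub_right]
  linarith

end StdGaussian

namespace IsStdGaussian

variable {Ω : Type*} [MeasurableSpace Ω] {μ : Measure Ω} [IsProbabilityMeasure μ] {m : ℕ}
  {Z : Ω → EuclideanSpace ℝ (Fin m)}

theorem map_eq_stdGaussian (hZmeas : Measurable Z) (hZ : IsStdGaussian μ Z) :
    μ.map Z = stdGaussian (EuclideanSpace ℝ (Fin m)) := by
  have hcoord (i : Fin m) : Measurable fun ω => Z ω i :=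
    (measurable_pi_apply i).comp ((WithLp.measurable_ofLp _ _).comp hZmeas)
  have hZ_eq : Z = WithLp.toLp 2 ∘ fun ω i => Z ω i := by
    funext ω
    simp
  rw [hZ_eq, ← Measure.map_map (WithLp.measurable_toLp _ _) (measurable_pi_lambda _ hcoord),
    (iIndepFun_iff_map_fun_eq_pi_map fun i => (hcoord i).aemeasurable).1 hZ.2]
  simp_rw [hZ.1]
  exact map_pi_eq_stdGaussian

theorem integrable (hZmeas : Measurable Z) (hZ : IsStdGaussian μ Z) : Integrable Z μ := by
  have : Integrable id (μ.map Z) := by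
    rw [hZ.map_eq_stdGaussian hZmeas]
    exact IsGaussian.integrable_id
  exact (integrable_map_measure aestronglyMeasurable_id hZmeas.aemeasurable).1 this

end IsStdGaussian

theorem perturbed_loss_gradient_general {m : ℕ} {Ω : Type*} [MeasurableSpace Ω]
    (μ : Measure Ω) [IsProbabilityMeasure μ]
    (Y : Finset (EuclideanSpace ℝ (Fin m))) (hY : Y.Nonempty)
    (ystar : EuclideanSpace ℝ (Fin m))
    (Z : Ω → EuclideanSpace ℝ (Fin m)) (hZmeas : Measurable Z)
    (hZ : IsStdGaussian μ Z)
    (g : EuclideanSpace ℝ (Fin m) → EuclideanSpace ℝ (Fin m))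
    (hgmeas : Measurable g)
    (hg : ∀ z, g z ∈ Y ∧ ∀ y ∈ Y, ⟪z, y⟫ ≤ ⟪z, g z⟫) :
    ∀ θ : EuclideanSpace ℝ (Fin m),
      HasGradientAt (fun θ' : EuclideanSpace ℝ (Fin m) =>
          (∫ ω, Y.sup' hY (fun y => ⟪θ' + Z ω, y⟫) ∂μ) - ⟪θ', ystar⟫)
        ((∫ ω, g (θ + Z ω) ∂μ) - ystar) θ := by
  intro θ
  have hno_ties : ∀ᵐ ω ∂μ, ∀ y ∈ Y, ∀ y' ∈ Y, y ≠ y' → ⟪θ + Z ω, y⟫ ≠ ⟪θ + Z ω, y'⟫ :=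
    ae_of_ae_map hZmeas.aemeasurable
      (by rw [hZ.map_eq_stdGaussian hZmeas]; exact ae_stdGaussian_inner_ne Y θ)
  have huniq : ∀ᵐ ω ∂μ, ∀ y ∈ Y, y ≠ g (θ + Z ω) →
      ⟪θ + Z ω, y⟫ < ⟪θ + Z ω, g (θ + Z ω)⟫ :=
    hno_ties.mono fun ω h y hy hne =>
      ((hg _).2 y hy).lt_of_ne (h y hy _ (hg _).1 hne)
  exact (hasGradientAt_integral_sup'_inner Y hY (hZ.integrable hZmeas) hgmeas
    (fun x => (hg x).1) huniq).sub (hasGradientAt_inner_const ystar)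

/-- The perturbed loss `L(θ) = E[max_{y ∈ Y}(θ+Z)ᵀy] − θᵀy*` has gradient
`∇L(θ) = E[argmax_{y ∈ Y}(θ+Z)ᵀy] − y*` (Equation (6) of the paper), for any
measurable argmax selection `g`. -/
theorem perturbed_loss_gradient {m : ℕ} {Ω : Type*} [MeasurableSpace Ω]
    (μ : Measure Ω) [IsProbabilityMeasure μ]
    (Y : Finset (EuclideanSpace ℝ (Fin m))) (hY : Y.Nonempty)
    (ystar : EuclideanSpace ℝ (Fin m)) (hystar : ystar ∈ Y)
    (Z : Ω → EuclideanSpace ℝ (Fin m)) (hZmeas : Measurable Z)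
    (hZ : IsStdGaussian μ Z)
    (g : EuclideanSpace ℝ (Fin m) → EuclideanSpace ℝ (Fin m))
    (hgmeas : Measurable g)
    (hg : ∀ z, g z ∈ Y ∧ ∀ y ∈ Y, ⟪z, y⟫ ≤ ⟪z, g z⟫) :
    ∀ θ : EuclideanSpace ℝ (Fin m),
      HasGradientAt (fun θ' : EuclideanSpace ℝ (Fin m) =>
          (∫ ω, Y.sup' hY (fun y => ⟪θ' + Z ω, y⟫) ∂μ) - ⟪θ', ystar⟫)
        ((∫ ω, g (θ + Z ω) ∂μ) - ystar) θ :=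
  perturbed_loss_gradient_general μ Y hY ystar Z hZmeas hZ g hgmeas hg
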